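/- Let F be a decomposable r-sort species with composition operator Η and Λ-weight w. For each k ≥ 0 define GF_{F_Η^(k)}(z1,...,zr) = Σ_{n1,...,nr ≥ 0} Σ_{x ∈ F_Η^(k)[([n1],...,[nr])]} w(x) · z1^{n1}···zr^{nr}/(n1!···nr!). Then for every k ≥ 0, GF_{F_Η^(k)}(z1,...,zr) = (1/k!)(GF_{F_Η}(z1,...,zr))^k. -/

import Mathlib

open scoped Classical

noncomputable section

/-- Objects of `Set^r`: `r`-tuples of finite sets (realized as finite subsets of `ℕ`). -/
abbrev Obj (r : ℕ) := Fin r → Finset ℕ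

variable {r : ℕ}

/-- The `r`-tuple of empty sets. -/
def oEmpty (r : ℕ) : Obj r := fun _ => ∅

/-- Componentwise union (the disjoint union `⨿` when the arguments are
componentwise disjoint). -/
def oUnion (Ω₁ Ω₂ : Obj r) : Obj r := fun i => Ω₁ i ∪ Ω₂ i

/-- Componentwise intersection. -/
def oInter (Ω₁ Ω₂ : Obj r) : Obj r := fun i => Ω₁ i ∩ Ω₂ i

/-- Componentwise set difference. -/
def oDiff (Ω₁ Ω₂ : Obj r) : Obj r := fun i => Ω₁ i \ Ω₂ i

/-- Componentwise disjointness. -/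
def oDisj (Ω₁ Ω₂ : Obj r) : Prop := ∀ i, Disjoint (Ω₁ i) (Ω₂ i)

/-- Componentwise containment. -/
def oSub (Ω₁ Ω₂ : Obj r) : Prop := ∀ i, Ω₁ i ⊆ Ω₂ i

/-- A morphism of `Set^r`: an `r`-tuple of bijections between the components. -/
def Mor (Ω₁ Ω₂ : Obj r) : Type := ∀ i, {x // x ∈ Ω₁ i} ≃ {x // x ∈ Ω₂ i}

/-- The identity morphism. -/
def idMor (Ω : Obj r) : Mor Ω Ω := fun _ => Equiv.refl _

/-- Composition of morphisms. -/
def compMor {Ω₁ Ω₂ Ω₃ : Obj r} (f : Mor Ω₁ Ω₂) (g : Mor Ω₂ Ω₃) : Mor Ω₁ Ω₃ :=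
  fun i => (f i).trans (g i)

/-- An `r`-sort species: a (covariant) functor from `Set^r` to the category of
finite sets and bijections.  The value `F[Ω]` is the finite set `obj Ω`, and the
action on a morphism `f` is encoded by the function `map f : ℕ → ℕ` (only its
values on `obj Ω₁` are relevant). -/
structure Species (r : ℕ) where
  obj : Obj r → Finset ℕ
  map : ∀ {Ω₁ Ω₂ : Obj r}, Mor Ω₁ Ω₂ → ℕ → ℕ
  map_mem : ∀ {Ω₁ Ω₂ : Obj r} (f : Mor Ω₁ Ω₂), ∀ x ∈ obj Ω₁, map f x ∈ obj Ω₂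
  map_id : ∀ (Ω : Obj r), ∀ x ∈ obj Ω, map (idMor Ω) x = x
  map_comp : ∀ {Ω₁ Ω₂ Ω₃ : Obj r} (f : Mor Ω₁ Ω₂) (g : Mor Ω₂ Ω₃), ∀ x ∈ obj Ω₁,
    map (compMor f g) x = map g (map f x)

/-- The canonical identification of a disjoint union `s ∪ t` with the sum `s ⊕ t`. -/
def finsetSumEquiv {s t : Finset ℕ} (h : Disjoint s t) :
    {x // x ∈ s ∪ t} ≃ {x // x ∈ s} ⊕ {x // x ∈ t} :=
  (Equiv.subtypeEquivRight (fun x => by simp)).trans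
    (Equiv.Set.union (s := (↑s : Set ℕ)) (t := (↑t : Set ℕ)) (by exact_mod_cast h))

/-- The disjoint union of two bijections, as a bijection between unions. -/
def finsetUnionEquiv {s t s' t' : Finset ℕ} (h : Disjoint s t) (h' : Disjoint s' t')
    (f : {x // x ∈ s} ≃ {x // x ∈ s'}) (g : {x // x ∈ t} ≃ {x // x ∈ t'}) :
    {x // x ∈ s ∪ t} ≃ {x // x ∈ s' ∪ t'} :=
  (finsetSumEquiv h).trans ((f.sumCongr g).trans (finsetSumEquiv h').symm)

/-- The disjoint union `f ⨿ g` of two morphisms of `Set^r`. -/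
def morUnion {Ω₁ Ω₂ Ω₁' Ω₂' : Obj r} (h : oDisj Ω₁ Ω₂) (h' : oDisj Ω₁' Ω₂')
    (f : Mor Ω₁ Ω₁') (g : Mor Ω₂ Ω₂') : Mor (oUnion Ω₁ Ω₂) (oUnion Ω₁' Ω₂') :=
  fun i => finsetUnionEquiv (h i) (h' i) (f i) (g i)

/-- A composition operator `Η` for the species `F`: a natural transformation from
`F × F` (on pairs of componentwise disjoint objects) to `F ∘ ⨿` with injective
components, satisfying Axiom (D1). -/
structure CompOp {r : ℕ} (F : Species r) where
  η : Obj r → Obj r → ℕ × ℕ → ℕ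
  mem_η : ∀ {Ω₁ Ω₂ : Obj r}, oDisj Ω₁ Ω₂ → ∀ x ∈ F.obj Ω₁, ∀ y ∈ F.obj Ω₂,
    η Ω₁ Ω₂ (x, y) ∈ F.obj (oUnion Ω₁ Ω₂)
  inj_η : ∀ {Ω₁ Ω₂ : Obj r}, oDisj Ω₁ Ω₂ →
    Set.InjOn (η Ω₁ Ω₂) ((F.obj Ω₁ : Set ℕ) ×ˢ (F.obj Ω₂ : Set ℕ))
  natural : ∀ {Ω₁ Ω₂ Ω₁' Ω₂' : Obj r} (h : oDisj Ω₁ Ω₂) (h' : oDisj Ω₁' Ω₂')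
    (f : Mor Ω₁ Ω₁') (g : Mor Ω₂ Ω₂'), ∀ x ∈ F.obj Ω₁, ∀ y ∈ F.obj Ω₂,
    F.map (morUnion h h' f g) (η Ω₁ Ω₂ (x, y)) = η Ω₁' Ω₂' (F.map f x, F.map g y)
  D1 : ∀ {Ω₁ Ω₂ Ω₃ Ω₄ : Obj r}, oDisj Ω₁ Ω₂ → oDisj Ω₃ Ω₄ →
    oUnion Ω₁ Ω₂ = oUnion Ω₃ Ω₄ →
    η Ω₁ Ω₂ '' ((F.obj Ω₁ : Set ℕ) ×ˢ (F.obj Ω₂ : Set ℕ)) ∩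
      η Ω₃ Ω₄ '' ((F.obj Ω₃ : Set ℕ) ×ˢ (F.obj Ω₄ : Set ℕ)) =
    η Ω₁ Ω₂ ''
      ((η (oInter Ω₁ Ω₃) (oInter Ω₁ Ω₄) ''
          ((F.obj (oInter Ω₁ Ω₃) : Set ℕ) ×ˢ (F.obj (oInter Ω₁ Ω₄) : Set ℕ))) ×ˢ
        (η (oInter Ω₂ Ω₃) (oInter Ω₂ Ω₄) ''
          ((F.obj (oInter Ω₂ Ω₃) : Set ℕ) ×ˢ (F.obj (oInter Ω₂ Ω₄) : Set ℕ))))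

/-- The set `F_Η[Ω]` of indecomposable elements of `F[Ω]`. -/
def indec (F : Species r) (E : CompOp F) (Ω : Obj r) : Set ℕ :=
  if Ω = oEmpty r then ∅
  else (F.obj Ω : Set ℕ) \
    ⋃ (p : Obj r × Obj r) (_ : oDisj p.1 p.2) (_ : p.1 ≠ oEmpty r) (_ : p.2 ≠ oEmpty r)
      (_ : oUnion p.1 p.2 = Ω),
      E.η p.1 p.2 '' ((F.obj p.1 : Set ℕ) ×ˢ (F.obj p.2 : Set ℕ))

/-- The sets `F_Η^(k)[Ω]` of elements of `F[Ω]` consisting of exactly `k`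
indecomposable components. -/
def indecK (F : Species r) (E : CompOp F) : ℕ → Obj r → Set ℕ
  | 0 => fun Ω => if Ω = oEmpty r then (F.obj (oEmpty r) : Set ℕ) else ∅
  | (k + 1) => fun Ω => ⋃ (Ω₁ : Obj r) (_ : oSub Ω₁ Ω),
      E.η Ω₁ (oDiff Ω Ω₁) '' ((indec F E Ω₁) ×ˢ (indecK F E k (oDiff Ω Ω₁)))

/-- `Ω_I`: the componentwise disjoint union of the family `Ωs` over the index set `s`. -/
def bigU {ι : Type} [DecidableEq ι] (Ωs : ι → Obj r) (s : Finset ι) : Obj r :=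
  fun i => s.biUnion (fun j => Ωs j i)

/-- `Brack F E Ωs leaf s B` says that `B` is an `Η`-bracketing of the sets
`leaf (Ωs i)`, `i ∈ s` (each occurring exactly once).  For `leaf Ω = F[Ω]` this is an
`Η`-bracketing of the `F[Ωs i]`; for `leaf = indec F E` it is an `Η`-bracketing of
the `F_Η[Ωs i]`. -/
inductive Brack (F : Species r) (E : CompOp F) {ι : Type} [DecidableEq ι]
    (Ωs : ι → Obj r) (leaf : Obj r → Set ℕ) : Finset ι → Set ℕ → Prop
  | single (i : ι) : Brack F E Ωs leaf {i} (leaf (Ωs i))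
  | node {s t : Finset ι} {B₁ B₂ : Set ℕ} :
      Disjoint s t → s.Nonempty → t.Nonempty →
      Brack F E Ωs leaf s B₁ → Brack F E Ωs leaf t B₂ →
      Brack F E Ωs leaf (s ∪ t) (E.η (bigU Ωs s) (bigU Ωs t) '' (B₁ ×ˢ B₂))

/-- A `Λ`-weight on `(F, Η)`: Axioms (W0), (W1), (W2). -/
structure Weight {r : ℕ} (F : Species r) (E : CompOp F) (Λ : Type) [CommRing Λ]
    [Algebra ℚ Λ] where
  w : Obj r → ℕ → Λ
  W0 : ∀ x ∈ F.obj (oEmpty r), w (oEmpty r) x = 1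
  W1 : ∀ {Ω Ω' : Obj r} (f : Mor Ω Ω'), ∀ x ∈ F.obj Ω, w Ω' (F.map f x) = w Ω x
  W2 : ∀ {Ω₁ Ω₂ : Obj r}, oDisj Ω₁ Ω₂ → ∀ x ∈ indec F E Ω₁, ∀ y ∈ F.obj Ω₂,
    w (oUnion Ω₁ Ω₂) (E.η Ω₁ Ω₂ (x, y)) = w Ω₁ x * w Ω₂ y

/-- The standard object `([n₁], …, [n_r])`, with `[n] = {1, …, n}`. -/
def stdObj {r : ℕ} (n : Fin r → ℕ) : Obj r := fun i => Finset.Icc 1 (n i)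

/-- The exponential generating function
`Σ_{n₁,…,n_r ≥ 0} Σ_{x ∈ S[([n₁],…,[n_r])]} w(x) z₁^{n₁} ⋯ z_r^{n_r}/(n₁! ⋯ n_r!)`
of a subfamily `S` of a species `F`, with respect to a weight `w`. -/
def GF {r : ℕ} {Λ : Type} [CommRing Λ] [Algebra ℚ Λ] (F : Species r)
    (S : Obj r → Set ℕ) (w : Obj r → ℕ → Λ) : MvPowerSeries (Fin r) Λ :=
  fun d => (algebraMap ℚ Λ (∏ i, (1 / (Nat.factorial (d i)) : ℚ))) *
    ∑ x ∈ (F.obj (stdObj fun i => d i)).filter (fun x => x ∈ S (stdObj fun i => d i)),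
      w (stdObj fun i => d i) x

/-- The exponential `exp f = Σ_{k ≥ 0} f^k / k!` of a multivariate formal power
series `f` with zero constant term (the coefficient of a given monomial only
receives contributions from `k` at most the total degree). -/
def mvExp {σ Λ : Type} [CommRing Λ] [Algebra ℚ Λ] (f : MvPowerSeries σ Λ) :
    MvPowerSeries σ Λ :=
  fun d => ∑ k ∈ Finset.range ((d.sum fun _ m => m) + 1),
    algebraMap ℚ Λ ((1 : ℚ) / (Nat.factorial k)) * MvPowerSeries.coeff (R := Λ) d (f ^ k)

/-- The logarithm `log f = Σ_{k ≥ 1} (-1)^{k+1} (f-1)^k / k` of a multivariate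
formal power series `f` with constant term `1`. -/
def mvLog {σ Λ : Type} [CommRing Λ] [Algebra ℚ Λ] (f : MvPowerSeries σ Λ) :
    MvPowerSeries σ Λ :=
  fun d => ∑ k ∈ Finset.Icc 1 (d.sum fun _ m => m),
    algebraMap ℚ Λ ((-1 : ℚ) ^ (k + 1) / k) * MvPowerSeries.coeff (R := Λ) d ((f - 1) ^ k)

/-- The refined generating function `G̃F_F(z₁,…,z_r,y)`, a power series in
`z₁, …, z_r` with coefficients that are polynomials in `y` (recorded via
`Polynomial Λ`, the variable `y` being `Polynomial.X`):
`Σ_{n₁,…,n_r ≥ 0} Σ_k Σ_{x ∈ F_Η^(k)[([n₁],…,[n_r])]} y^k w(x) z₁^{n₁}⋯z_r^{n_r}/(n₁!⋯n_r!)`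
(for fixed `n₁, …, n_r` only the `k ≤ n₁ + ⋯ + n_r` contribute, since
`F_Η^(k)[Ω] = ∅ for k > ‖Ω‖`). -/
def tGF {r : ℕ} {Λ : Type} [CommRing Λ] [Algebra ℚ Λ] (F : Species r) (E : CompOp F)
    (w : Obj r → ℕ → Λ) : MvPowerSeries (Fin r) (Polynomial Λ) :=
  fun d => Polynomial.C (algebraMap ℚ Λ (∏ i, (1 / (Nat.factorial (d i)) : ℚ))) *
    ∑ k ∈ Finset.range ((∑ i, d i) + 1), Polynomial.X ^ k *
      Polynomial.C (∑ x ∈ (F.obj (stdObj fun i => d i)).filter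
          (fun x => x ∈ indecK F E k (stdObj fun i => d i)),
        w (stdObj fun i => d i) x)

/-- The species `E(F_Η)` of sets of `F_Η`-structures:  `E(F_Η)[Ω]` consists of all
finite sets `{(x₁,Ω₁),…,(x_k,Ω_k)}` with `x_i ∈ F_Η[Ω_i]`, the `Ω_i` nonempty and
pairwise componentwise disjoint, and `Ω₁ ⨿ ⋯ ⨿ Ω_k = Ω`. -/
def ESet {r : ℕ} (F : Species r) (E : CompOp F) (Ω : Obj r) :
    Set (Finset (ℕ × Obj r)) :=
  { s | (∀ p ∈ s, p.1 ∈ indec F E p.2 ∧ p.2 ≠ oEmpty r) ∧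
        (∀ p ∈ s, ∀ q ∈ s, p ≠ q → oDisj p.2 q.2) ∧
        (∀ i, Ω i = s.biUnion (fun p => p.2 i)) }

/-- The bijection between a finite set and its image under a map injective on it. -/
def imageEquiv {u : Finset ℕ} (g : ℕ → ℕ) (hg : Set.InjOn g (u : Set ℕ)) :
    {x // x ∈ u} ≃ {x // x ∈ u.image g} :=
  Equiv.ofBijective (fun x => ⟨g x, Finset.mem_image_of_mem g x.2⟩) (by
    constructor
    · rintro ⟨a, ha⟩ ⟨b, hb⟩ hab
      exact Subtype.ext (hg (by exact_mod_cast ha) (by exact_mod_cast hb)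
        (congrArg Subtype.val hab))
    · rintro ⟨y, hy⟩
      rcases Finset.mem_image.mp hy with ⟨a, ha, rfl⟩
      exact ⟨⟨a, ha⟩, rfl⟩)

/-- The underlying function `ℕ → ℕ` of the `i`-th component of a morphism. -/
def apMor {Ω Ω' : Obj r} (f : Mor Ω Ω') (i : Fin r) (a : ℕ) : ℕ :=
  if h : a ∈ Ω i then ((f i) ⟨a, h⟩ : ℕ) else a

/-- The componentwise image of a subobject `O ⊆ Ω` under a morphism `f : Ω → Ω'`. -/
def oImage {Ω Ω' : Obj r} (f : Mor Ω Ω') (O : Obj r) : Obj r :=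
  fun i => (O i).image (apMor f i)

/-- The restriction of a morphism `f : Ω → Ω'` to a subobject `O ⊆ Ω`. -/
def restrictMor {Ω Ω' : Obj r} (f : Mor Ω Ω') {O : Obj r} (hO : oSub O Ω) :
    Mor O (oImage f O) :=
  fun i => imageEquiv (apMor f i) (by
    intro a ha b hb hab
    have ha' : a ∈ Ω i := hO i (by exact_mod_cast ha)
    have hb' : b ∈ Ω i := hO i (by exact_mod_cast hb)
    have h1 : ((f i) ⟨a, ha'⟩ : ℕ) = ((f i) ⟨b, hb'⟩ : ℕ) := by
      simpa [apMor, dif_pos ha', dif_pos hb'] using hab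
    have h2 := (f i).injective (Subtype.ext h1)
    exact congrArg Subtype.val h2)

/-- The induced action of a morphism `f : Ω → Ω'` on `E(F_Η)[Ω]`. -/
def Emap {r : ℕ} (F : Species r) {Ω Ω' : Obj r} (f : Mor Ω Ω')
    (s : Finset (ℕ × Obj r)) : Finset (ℕ × Obj r) :=
  s.image (fun p =>
    if h : oSub p.2 Ω then (F.map (restrictMor f h) p.1, oImage f p.2) else p)

/-!
An element `x ∈ F_Η^(k)[Ω]` is an iterated composite of `k` indecomposables. Call a block
`B ⊆ Ω` a component of `x` if `x = η(p, q)` with `p ∈ F_Η[B]`. Axiom (D1) shows that two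
components are disjoint or nested, hence (being indecomposable) disjoint, and that splitting
off a component `B` leaves exactly the other components as the components of `q`. So
`x ∈ F_Η^(k)[Ω]` iff its components cover `Ω` and there are exactly `k` of them, and every
`x ∈ F_Η^(k+1)[Ω]` arises in exactly `k + 1` ways as `η(p, q)` with `p` indecomposable and
`q ∈ F_Η^(k)`. With (W1), (W2) and the product formula for exponential generating functions
this gives `GF_{F_Η} · GF_{F_Η^(k)} = (k + 1) GF_{F_Η^(k+1)}`, and the theorem follows by
induction on `k`. The base case rests on `F[∅]` being a singleton, which (D1) forces as soon
as `F` is not empty; the same fact makes `η(e, ·) : F[D] → F[D]` a bijection.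
-/

section Objects

variable {r : ℕ}

@[simp] theorem oUnion_eq_sup (A B : Obj r) : oUnion A B = A ⊔ B := rfl

@[simp] theorem oInter_eq_inf (A B : Obj r) : oInter A B = A ⊓ B := rfl

@[simp] theorem oDiff_eq_sdiff (A B : Obj r) : oDiff A B = A \ B := rfl

@[simp] theorem oEmpty_eq_bot : oEmpty r = ⊥ := rfl

theorem oDisj_iff_disjoint {A B : Obj r} : oDisj A B ↔ Disjoint A B := Pi.disjoint_iff.symm

theorem Obj.ne_bot_iff {A : Obj r} : A ≠ ⊥ ↔ ∃ i, (A i).Nonempty := by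
  simp only [ne_eq, funext_iff, Pi.bot_apply, Finset.bot_eq_empty, not_forall,
    Finset.nonempty_iff_ne_empty]

theorem exists_mor_disjoint (Ω : Obj r) : ∃ (Ω' : Obj r) (_ : Mor Ω Ω'), Disjoint Ω Ω' := by
  set N := (Finset.univ.sup fun i => (Ω i).sup id) + 1
  refine ⟨fun i => (Ω i).image (· + N),
    fun i => imageEquiv (u := Ω i) (· + N) fun a _ b _ h => by simpa using h,
    Pi.disjoint_iff.2 fun i => ?_⟩
  rw [Finset.disjoint_left]
  intro a ha hmem
  obtain ⟨b, hb, rfl⟩ := Finset.mem_image.mp hmem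
  have h1 : b + N ≤ (Ω i).sup id := Finset.le_sup (f := id) ha
  have h2 : (Ω i).sup id ≤ Finset.univ.sup fun i => (Ω i).sup id :=
    Finset.le_sup (f := fun i => (Ω i).sup id) (Finset.mem_univ i)
  omega

end Objects

namespace CompOp

variable {r : ℕ} {F : Species r}

def img (E : CompOp F) (A B : Obj r) : Set ℕ :=
  E.η A B '' ((F.obj A : Set ℕ) ×ˢ (F.obj B : Set ℕ))

variable {E : CompOp F} {A B C D : Obj r} {p q x : ℕ}

theorem mem_img : x ∈ E.img A B ↔ ∃ p ∈ F.obj A, ∃ q ∈ F.obj B, E.η A B (p, q) = x := by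
  constructor
  · rintro ⟨⟨p, q⟩, ⟨hp, hq⟩, rfl⟩
    exact ⟨p, hp, q, hq, rfl⟩
  · rintro ⟨p, hp, q, hq, rfl⟩
    exact ⟨(p, q), ⟨hp, hq⟩, rfl⟩

theorem η_mem_img (hp : p ∈ F.obj A) (hq : q ∈ F.obj B) : E.η A B (p, q) ∈ E.img A B :=
  mem_img.2 ⟨p, hp, q, hq, rfl⟩

theorem η_mem_obj (h : Disjoint A B) (hp : p ∈ F.obj A) (hq : q ∈ F.obj B) :
    E.η A B (p, q) ∈ F.obj (A ⊔ B) :=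
  E.mem_η (oDisj_iff_disjoint.2 h) p hp q hq

theorem img_subset_obj (h : Disjoint A B) : E.img A B ⊆ F.obj (A ⊔ B) := by
  rintro _ ⟨⟨p, q⟩, ⟨hp, hq⟩, rfl⟩
  exact η_mem_obj h hp hq

/-- Axiom (D1), read off on a single element. -/
theorem η_mem_img_iff (hAB : Disjoint A B) (hCD : Disjoint C D) (hU : A ⊔ B = C ⊔ D)
    (hp : p ∈ F.obj A) (hq : q ∈ F.obj B) :
    E.η A B (p, q) ∈ E.img C D ↔
      p ∈ E.img (A ⊓ C) (A ⊓ D) ∧ q ∈ E.img (B ⊓ C) (B ⊓ D) := by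
  have hA : A ⊓ C ⊔ A ⊓ D = A := by rw [← inf_sup_left, ← hU, inf_sup_self]
  have hB : B ⊓ C ⊔ B ⊓ D = B := by rw [← inf_sup_left, ← hU, sup_comm, inf_sup_self]
  have hsub : E.img (A ⊓ C) (A ⊓ D) ×ˢ E.img (B ⊓ C) (B ⊓ D) ⊆
      (F.obj A : Set ℕ) ×ˢ (F.obj B : Set ℕ) := by
    have hA' := img_subset_obj (E := E) (hCD.mono (inf_le_right (a := A)) (inf_le_right (a := A)))
    have hB' := img_subset_obj (E := E) (hCD.mono (inf_le_right (a := B)) (inf_le_right (a := B)))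
    rw [hA] at hA'
    rw [hB] at hB'
    exact Set.prod_mono hA' hB'
  have hD1 := E.D1 (oDisj_iff_disjoint.2 hAB) (oDisj_iff_disjoint.2 hCD) hU
  simp only [oInter_eq_inf] at hD1
  change E.img A B ∩ E.img C D = E.η A B '' (E.img (A ⊓ C) (A ⊓ D) ×ˢ E.img (B ⊓ C) (B ⊓ D))
    at hD1
  calc E.η A B (p, q) ∈ E.img C D ↔ E.η A B (p, q) ∈ E.img A B ∩ E.img C D := by
        rw [Set.mem_inter_iff, and_iff_right (η_mem_img hp hq)]
    _ ↔ (p, q) ∈ E.img (A ⊓ C) (A ⊓ D) ×ˢ E.img (B ⊓ C) (B ⊓ D) := by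
        rw [hD1]
        exact (E.inj_η (oDisj_iff_disjoint.2 hAB)).mem_image_iff hsub ⟨hp, hq⟩
    _ ↔ _ := Set.mem_prod

end CompOp

section Unit

variable {r : ℕ} {F : Species r}

theorem obj_bot_nonempty (E : CompOp F) (hF : ∃ Ω : Obj r, (F.obj Ω).Nonempty) :
    (F.obj ⊥).Nonempty := by
  obtain ⟨Ω, x, hx⟩ := hF
  obtain ⟨Ω', f, hdisj⟩ := exists_mor_disjoint Ω
  have hfx := F.map_mem f x hx
  have hx' := ((E.η_mem_img_iff hdisj hdisj rfl hx hfx).1 (CompOp.η_mem_img hx hfx)).1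
  rw [hdisj.eq_bot] at hx'
  obtain ⟨-, -, q, hq, -⟩ := CompOp.mem_img.1 hx'
  exact ⟨q, hq⟩

/-- By (D1) for `⊥ ⊔ ⊥ = ⊥ ⊔ ⊥`, every element of `F[⊥]` is a composite, so `η` maps
`F[⊥] × F[⊥]` injectively onto `F[⊥]`. -/
theorem card_obj_bot (E : CompOp F) (hF : ∃ Ω : Obj r, (F.obj Ω).Nonempty) :
    (F.obj ⊥).card = 1 := by
  set G := F.obj (⊥ : Obj r)
  have hdisj : Disjoint (⊥ : Obj r) ⊥ := disjoint_bot_left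
  have hinj : Set.InjOn (E.η ⊥ ⊥) ↑(G ×ˢ G) := by
    rw [Finset.coe_product]
    exact E.inj_η (oDisj_iff_disjoint.2 hdisj)
  have himage : (G ×ˢ G).image (E.η ⊥ ⊥) = G := by
    apply Finset.coe_injective
    rw [Finset.coe_image, Finset.coe_product]
    change E.img ⊥ ⊥ = (G : Set ℕ)
    refine subset_antisymm ?_ fun p hp => ?_
    · have h := E.img_subset_obj hdisj
      rwa [bot_sup_eq] at h
    · have h := ((E.η_mem_img_iff hdisj hdisj rfl hp hp).1 (CompOp.η_mem_img hp hp)).1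
      rwa [inf_idem] at h
  have hcard : G.card * G.card = G.card * 1 := by
    rw [mul_one, ← Finset.card_product, ← Finset.card_image_of_injOn hinj, himage]
  exact Nat.eq_of_mul_eq_mul_left (obj_bot_nonempty E hF).card_pos hcard

theorem CompOp.img_bot_left (E : CompOp F) (hF : ∃ Ω : Obj r, (F.obj Ω).Nonempty)
    (D : Obj r) : E.img ⊥ D = F.obj D := by
  have hdisj : Disjoint (⊥ : Obj r) D := disjoint_bot_left
  have hinj : Set.InjOn (E.η ⊥ D) ↑(F.obj ⊥ ×ˢ F.obj D) := by
    rw [Finset.coe_product]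
    exact E.inj_η (oDisj_iff_disjoint.2 hdisj)
  have hcoe : E.img ⊥ D = ↑((F.obj ⊥ ×ˢ F.obj D).image (E.η ⊥ D)) := by
    rw [Finset.coe_image, Finset.coe_product]
    rfl
  have hsub : (F.obj ⊥ ×ˢ F.obj D).image (E.η ⊥ D) ⊆ F.obj D := by
    rw [← Finset.coe_subset, ← hcoe]
    simpa using E.img_subset_obj hdisj
  rw [hcoe, Finset.eq_of_subset_of_card_le hsub (by
    rw [Finset.card_image_of_injOn hinj, Finset.card_product, card_obj_bot E hF, one_mul])]

end Unit

section Indecomposable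

variable {r : ℕ} {F : Species r} {E : CompOp F} {Ω B C : Obj r} {x : ℕ}

theorem indec_subset_obj : indec F E Ω ⊆ F.obj Ω := by
  unfold indec
  split_ifs
  · exact Set.empty_subset _
  · exact Set.sdiff_subset

theorem ne_bot_of_mem_indec (hx : x ∈ indec F E Ω) : Ω ≠ ⊥ := by
  rintro rfl
  simp [indec] at hx

theorem mem_indec_iff : x ∈ indec F E Ω ↔
    Ω ≠ ⊥ ∧ x ∈ F.obj Ω ∧ ∀ A ≤ Ω, A ≠ ⊥ → A ≠ Ω → x ∉ E.img A (Ω \ A) := by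
  by_cases hΩ : Ω = ⊥
  · simp [indec, hΩ]
  rw [indec, if_neg (by simpa using hΩ)]
  simp only [Set.mem_sdiff, Set.mem_iUnion, not_exists, oDisj_iff_disjoint, oUnion_eq_sup,
    oEmpty_eq_bot, ne_eq, hΩ, not_false_eq_true, true_and, Prod.forall]
  refine and_congr_right fun _ => ⟨fun h A hA hA0 hAΩ hx => ?_, fun h I J hIJ hI hJ hU hx => ?_⟩
  · refine h A (Ω \ A) disjoint_sdiff_self_right hA0 ?_ (sup_sdiff_cancel_right hA) hx
    rw [sdiff_eq_bot_iff]
    exact fun hΩA => hAΩ (le_antisymm hA hΩA)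
  · subst hU
    refine h I le_sup_left hI (fun hI' => hJ ?_) ?_
    · exact hIJ.symm.eq_bot_of_le (le_sup_right.trans hI'.ge)
    · rwa [hIJ.sup_sdiff_cancel_left]

theorem disjoint_or_le_of_mem_indec {p : ℕ} (hp : p ∈ indec F E B) (hB : B ≤ Ω)
    (h : p ∈ E.img (B ⊓ C) (B ⊓ (Ω \ C))) : Disjoint B C ∨ B ≤ C := by
  rw [← inf_sdiff_assoc, inf_eq_left.2 hB, ← sdiff_inf_self_left] at h
  obtain ⟨-, -, hsplit⟩ := mem_indec_iff.1 hp
  by_contra hc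
  rw [not_or] at hc
  exact hsplit _ inf_le_left (disjoint_iff.not.1 hc.1) (inf_eq_left.not.2 hc.2) h

end Indecomposable

section Components

variable {r : ℕ} {F : Species r} {E : CompOp F} {Ω B C C₁ : Obj r} {p q x : ℕ}

def components (E : CompOp F) (Ω : Obj r) (x : ℕ) : Set (Obj r) :=
  {B | B ≤ Ω ∧ ∃ p ∈ indec F E B, ∃ q ∈ F.obj (Ω \ B), E.η B (Ω \ B) (p, q) = x}

theorem η_mem_img_iff_of_le (hF : ∃ Ω : Obj r, (F.obj Ω).Nonempty) (hC₁ : C₁ ≤ C)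
    (hC : C ≤ Ω) (hp : p ∈ F.obj C) (hq : q ∈ F.obj (Ω \ C)) :
    E.η C (Ω \ C) (p, q) ∈ E.img C₁ (Ω \ C₁) ↔ p ∈ E.img C₁ (C \ C₁) := by
  have h₁ : C ⊓ (Ω \ C₁) = C \ C₁ := by rw [← inf_sdiff_assoc, inf_eq_left.2 hC]
  have h₂ : (Ω \ C) ⊓ C₁ = ⊥ := (disjoint_sdiff_self_left.mono_right hC₁).eq_bot
  have h₃ : (Ω \ C) ⊓ (Ω \ C₁) = Ω \ C := inf_eq_left.2 (sdiff_le_sdiff_left hC₁)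
  rw [E.η_mem_img_iff disjoint_sdiff_self_right disjoint_sdiff_self_right
    (by rw [sup_sdiff_cancel_right hC, sup_sdiff_cancel_right (hC₁.trans hC)]) hp hq,
    inf_eq_right.2 hC₁, h₁, h₂, h₃, E.img_bot_left hF]
  exact and_iff_left hq

theorem η_mem_img_iff_of_disjoint (hF : ∃ Ω : Obj r, (F.obj Ω).Nonempty)
    (hBC : Disjoint B C) (hB : B ≤ Ω) (hC : C ≤ Ω) (hp : p ∈ F.obj B)
    (hq : q ∈ F.obj (Ω \ B)) :
    E.η B (Ω \ B) (p, q) ∈ E.img C (Ω \ C) ↔ q ∈ E.img C ((Ω \ B) \ C) := by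
  have h₁ : B ⊓ (Ω \ C) = B := inf_eq_left.2 (le_sdiff.2 ⟨hB, hBC⟩)
  have h₂ : (Ω \ B) ⊓ C = C := inf_eq_right.2 (le_sdiff.2 ⟨hC, hBC.symm⟩)
  have h₃ : (Ω \ B) ⊓ (Ω \ C) = (Ω \ B) \ C := by rw [sdiff_sdiff_left, sdiff_sup]
  rw [E.η_mem_img_iff disjoint_sdiff_self_right disjoint_sdiff_self_right
    (by rw [sup_sdiff_cancel_right hB, sup_sdiff_cancel_right hC]) hp hq,
    hBC.eq_bot, h₁, h₂, h₃, E.img_bot_left hF]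
  exact and_iff_right hp

/-- If `x = η(p, q)` with `p` living on `B`, the first factors of `x` and of `q` along a
block `C` disjoint from `B` split in exactly the same ways. -/
theorem mem_img_iff_of_η_eq (hF : ∃ Ω : Obj r, (F.obj Ω).Nonempty) (hB : B ≤ Ω)
    (hC : C ≤ Ω \ B) (hC₁ : C₁ ≤ C) (hp : p ∈ F.obj B) (hq : q ∈ F.obj (Ω \ B))
    {P Q u v : ℕ} (hP : P ∈ F.obj C) (hQ : Q ∈ F.obj (Ω \ C)) (hu : u ∈ F.obj C)
    (hv : v ∈ F.obj ((Ω \ B) \ C)) (hx : E.η C (Ω \ C) (P, Q) = E.η B (Ω \ B) (p, q))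
    (hqe : E.η C ((Ω \ B) \ C) (u, v) = q) :
    P ∈ E.img C₁ (C \ C₁) ↔ u ∈ E.img C₁ (C \ C₁) := by
  obtain ⟨hCΩ, hCB⟩ := le_sdiff.1 hC
  rw [← η_mem_img_iff_of_le hF hC₁ hCΩ hP hQ, hx,
    η_mem_img_iff_of_disjoint hF (hCB.symm.mono_right hC₁) hB (hC₁.trans hCΩ) hp hq, ← hqe,
    η_mem_img_iff_of_le hF hC₁ hC hu hv]

theorem mem_indec_iff_of_η_eq (hF : ∃ Ω : Obj r, (F.obj Ω).Nonempty) (hB : B ≤ Ω)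
    (hC : C ≤ Ω \ B) (hp : p ∈ F.obj B) (hq : q ∈ F.obj (Ω \ B))
    {P Q u v : ℕ} (hP : P ∈ F.obj C) (hQ : Q ∈ F.obj (Ω \ C)) (hu : u ∈ F.obj C)
    (hv : v ∈ F.obj ((Ω \ B) \ C)) (hx : E.η C (Ω \ C) (P, Q) = E.η B (Ω \ B) (p, q))
    (hqe : E.η C ((Ω \ B) \ C) (u, v) = q) :
    P ∈ indec F E C ↔ u ∈ indec F E C := by
  simp only [mem_indec_iff, hP, hu, true_and]
  refine and_congr_right fun _ => forall₂_congr fun C₁ hC₁ => ?_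
  rw [mem_img_iff_of_η_eq hF hB hC hC₁ hp hq hP hQ hu hv hx hqe]

theorem ne_bot_of_mem_components (h : B ∈ components E Ω x) : B ≠ ⊥ := by
  obtain ⟨-, p, hp, -⟩ := h
  exact ne_bot_of_mem_indec hp

theorem disjoint_or_le_of_mem_components (hB : B ∈ components E Ω x)
    (hC : C ∈ components E Ω x) : Disjoint B C ∨ B ≤ C := by
  obtain ⟨hBΩ, p, hp, q, hq, rfl⟩ := hB
  obtain ⟨hCΩ, p', hp', q', hq', hx⟩ := hC
  have hmem : E.η B (Ω \ B) (p, q) ∈ E.img C (Ω \ C) :=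
    hx ▸ CompOp.η_mem_img (indec_subset_obj hp') hq'
  rw [E.η_mem_img_iff disjoint_sdiff_self_right disjoint_sdiff_self_right
    (by rw [sup_sdiff_cancel_right hBΩ, sup_sdiff_cancel_right hCΩ])
    (indec_subset_obj hp) hq] at hmem
  exact disjoint_or_le_of_mem_indec hp hBΩ hmem.1

theorem disjoint_of_mem_components (hB : B ∈ components E Ω x)
    (hC : C ∈ components E Ω x) (hne : B ≠ C) : Disjoint B C := by
  refine (disjoint_or_le_of_mem_components hB hC).resolve_right fun hBC => ?_
  rcases disjoint_or_le_of_mem_components hC hB with hCB | hCB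
  · exact ne_bot_of_mem_components hB (hCB.eq_bot_of_ge hBC)
  · exact hne (le_antisymm hBC hCB)

theorem notMem_components_sdiff : B ∉ components E (Ω \ B) q := fun h =>
  ne_bot_of_mem_components h (disjoint_self.1 (le_sdiff.1 h.1).2)

theorem components_η (hF : ∃ Ω : Obj r, (F.obj Ω).Nonempty) (hB : B ≤ Ω)
    (hp : p ∈ indec F E B) (hq : q ∈ F.obj (Ω \ B)) :
    components E Ω (E.η B (Ω \ B) (p, q)) = insert B (components E (Ω \ B) q) := by
  ext C
  refine ⟨fun hC => ?_, ?_⟩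
  · rcases eq_or_ne C B with rfl | hne
    · exact Set.mem_insert _ _
    have hCB := disjoint_of_mem_components hC ⟨hB, p, hp, q, hq, rfl⟩ hne
    obtain ⟨hCΩ, P, hP, Q, hQ, hx⟩ := hC
    have hC' : C ≤ Ω \ B := le_sdiff.2 ⟨hCΩ, hCB⟩
    have hqC : q ∈ E.img C ((Ω \ B) \ C) :=
      (η_mem_img_iff_of_disjoint hF hCB.symm hB hCΩ (indec_subset_obj hp) hq).1
        (hx ▸ CompOp.η_mem_img (indec_subset_obj hP) hQ)
    obtain ⟨u, hu, v, hv, huv⟩ := CompOp.mem_img.1 hqC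
    exact Or.inr ⟨hC', u, (mem_indec_iff_of_η_eq hF hB hC' (indec_subset_obj hp) hq
      (indec_subset_obj hP) hQ hu hv hx huv).1 hP, v, hv, huv⟩
  · rintro (rfl | ⟨hC', u, hu, v, hv, huv⟩)
    · exact ⟨hB, p, hp, q, hq, rfl⟩
    obtain ⟨hCΩ, hCB⟩ := le_sdiff.1 hC'
    have hxC : E.η B (Ω \ B) (p, q) ∈ E.img C (Ω \ C) :=
      (η_mem_img_iff_of_disjoint hF hCB.symm hB hCΩ (indec_subset_obj hp) hq).2
        (huv ▸ CompOp.η_mem_img (indec_subset_obj hu) hv)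
    obtain ⟨P, hP, Q, hQ, hx⟩ := CompOp.mem_img.1 hxC
    exact ⟨hCΩ, P, (mem_indec_iff_of_η_eq hF hB hC' (indec_subset_obj hp) hq hP hQ
      (indec_subset_obj hu) hv hx huv).2 hu, Q, hQ, hx⟩

end Components

section ComponentCover

variable {r : ℕ} {F : Species r} {E : CompOp F} {Ω B : Obj r} {p q x : ℕ}
  {s : Finset (Obj r)}

theorem mem_indecK_zero : x ∈ indecK F E 0 Ω ↔ Ω = ⊥ ∧ x ∈ F.obj ⊥ := by
  by_cases hΩ : Ω = ⊥ <;> simp [indecK, hΩ]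

theorem mem_indecK_succ {k : ℕ} : x ∈ indecK F E (k + 1) Ω ↔
    ∃ B ≤ Ω, ∃ p ∈ indec F E B, ∃ q ∈ indecK F E k (Ω \ B), E.η B (Ω \ B) (p, q) = x := by
  simp only [indecK, Set.mem_iUnion, exists_prop]
  constructor
  · rintro ⟨B, hB, ⟨p, q⟩, ⟨hp, hq⟩, rfl⟩
    exact ⟨B, hB, p, hp, q, hq, rfl⟩
  · rintro ⟨B, hB, p, hp, q, hq, rfl⟩
    exact ⟨B, hB, (p, q), ⟨hp, hq⟩, rfl⟩

theorem indecK_subset_obj (k : ℕ) : indecK F E k Ω ⊆ F.obj Ω := by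
  induction k generalizing Ω with
  | zero =>
    intro x hx
    obtain ⟨rfl, hx'⟩ := mem_indecK_zero.1 hx
    exact hx'
  | succ k ih =>
    intro x hx
    obtain ⟨B, hB, p, hp, q, hq, rfl⟩ := mem_indecK_succ.1 hx
    simpa [sup_sdiff_cancel_right hB] using
      CompOp.η_mem_obj disjoint_sdiff_self_right (indec_subset_obj hp) (ih hq)

def IsComponentCover (E : CompOp F) (Ω : Obj r) (x : ℕ) (s : Finset (Obj r)) : Prop :=
  ↑s = components E Ω x ∧ s.sup id = Ω

theorem IsComponentCover.insert (hF : ∃ Ω : Obj r, (F.obj Ω).Nonempty) (hB : B ≤ Ω)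
    (hp : p ∈ indec F E B) (hq : q ∈ F.obj (Ω \ B)) (hs : IsComponentCover E (Ω \ B) q s) :
    IsComponentCover E Ω (E.η B (Ω \ B) (p, q)) (insert B s) ∧ B ∉ s := by
  refine ⟨⟨?_, ?_⟩, fun h => notMem_components_sdiff (hs.1 ▸ h : B ∈ components E (Ω \ B) q)⟩
  · rw [Finset.coe_insert, hs.1, components_η hF hB hp hq]
  · rw [Finset.sup_insert, hs.2, id, sup_sdiff_cancel_right hB]

theorem IsComponentCover.erase (hF : ∃ Ω : Obj r, (F.obj Ω).Nonempty) (hB : B ≤ Ω)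
    (hp : p ∈ indec F E B) (hq : q ∈ F.obj (Ω \ B))
    (hs : IsComponentCover E Ω (E.η B (Ω \ B) (p, q)) s) :
    B ∈ s ∧ IsComponentCover E (Ω \ B) q (s.erase B) := by
  have hcoe := hs.1
  rw [components_η hF hB hp hq] at hcoe
  have hBs : B ∈ s := by rw [← Finset.mem_coe, hcoe]; exact Set.mem_insert _ _
  have hcoe' : ↑(s.erase B) = components E (Ω \ B) q := by
    rw [Finset.coe_erase, hcoe, Set.insert_sdiff_self_of_notMem notMem_components_sdiff]
  refine ⟨hBs, hcoe', le_antisymm (Finset.sup_le fun C hC => ?_) ?_⟩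
  · exact (hcoe' ▸ Finset.mem_coe.2 hC : C ∈ components E (Ω \ B) q).1
  · have hsup := Finset.sup_insert (f := id) (s := s.erase B) (b := B)
    rw [Finset.insert_erase hBs, hs.2] at hsup
    exact sdiff_le_iff.2 hsup.le

theorem mem_indecK_iff (hF : ∃ Ω : Obj r, (F.obj Ω).Nonempty) (K : ℕ) :
    x ∈ indecK F E K Ω ↔
      x ∈ F.obj Ω ∧ ∃ s, IsComponentCover E Ω x s ∧ s.card = K := by
  induction K generalizing Ω x with
  | zero =>
    rw [mem_indecK_zero]
    refine ⟨?_, ?_⟩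
    · rintro ⟨rfl, hx⟩
      refine ⟨hx, ∅, ⟨?_, rfl⟩, rfl⟩
      rw [Finset.coe_empty]
      refine (Set.eq_empty_of_forall_notMem fun B hB => ?_).symm
      exact ne_bot_of_mem_components hB (le_bot_iff.1 hB.1)
    · rintro ⟨hx, s, ⟨-, hsup⟩, hcard⟩
      obtain rfl : Ω = ⊥ := by rw [← hsup, Finset.card_eq_zero.1 hcard, Finset.sup_empty]
      exact ⟨rfl, hx⟩
  | succ K ih =>
    refine ⟨fun hx => ⟨indecK_subset_obj _ hx, ?_⟩, ?_⟩
    · obtain ⟨B, hB, p, hp, q, hq, rfl⟩ := mem_indecK_succ.1 hx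
      obtain ⟨hqF, s, hs, hcard⟩ := ih.1 hq
      obtain ⟨hs', hBs⟩ := hs.insert hF hB hp hqF
      exact ⟨insert B s, hs', by rw [Finset.card_insert_of_notMem hBs, hcard]⟩
    · rintro ⟨hx, s, hs, hcard⟩
      obtain ⟨B, hBs⟩ := Finset.card_pos.1 (by rw [hcard]; exact K.succ_pos)
      obtain ⟨hB, p, hp, q, hq, rfl⟩ := (hs.1 ▸ Finset.mem_coe.2 hBs : B ∈ components E Ω x)
      have hs' := (hs.erase hF hB hp hq).2
      exact mem_indecK_succ.2 ⟨B, hB, p, hp, q,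
        ih.2 ⟨hq, s.erase B, hs', by rw [Finset.card_erase_of_mem hBs, hcard, K.add_sub_cancel]⟩,
        rfl⟩

/-- The point is that the cofactor `q` of a component automatically lies in `F_Η^(k)`. -/
theorem mem_components_iff_of_mem_indecK_succ (hF : ∃ Ω : Obj r, (F.obj Ω).Nonempty)
    {k : ℕ} (hx : x ∈ indecK F E (k + 1) Ω) : B ∈ components E Ω x ↔
      B ≤ Ω ∧ ∃ p ∈ indec F E B, ∃ q ∈ indecK F E k (Ω \ B), E.η B (Ω \ B) (p, q) = x := by
  refine ⟨?_, fun ⟨hB, p, hp, q, hq, hx⟩ => ⟨hB, p, hp, q, indecK_subset_obj k hq, hx⟩⟩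
  rintro ⟨hB, p, hp, q, hq, rfl⟩
  obtain ⟨-, s, hs, hcard⟩ := (mem_indecK_iff hF (k + 1)).1 hx
  obtain ⟨hBs, hs'⟩ := hs.erase hF hB hp hq
  exact ⟨hB, p, hp, q, (mem_indecK_iff hF k).2
    ⟨hq, s.erase B, hs', by rw [Finset.card_erase_of_mem hBs, hcard, k.add_sub_cancel]⟩, rfl⟩

end ComponentCover

section Transport

variable {r : ℕ} {F : Species r} {E : CompOp F} {Ω Ω' B C : Obj r} {p q x : ℕ}

def invMor (f : Mor Ω Ω') : Mor Ω' Ω := fun i => (f i).symm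

theorem Species.map_invMor_map (f : Mor Ω Ω') (hx : x ∈ F.obj Ω) :
    F.map (invMor f) (F.map f x) = x := by
  rw [← F.map_comp f (invMor f) x hx]
  convert F.map_id Ω x hx
  exact funext fun i => Equiv.self_trans_symm (f i)

theorem Species.map_map_invMor (f : Mor Ω Ω') (hx : x ∈ F.obj Ω') :
    F.map f (F.map (invMor f) x) = x := by
  rw [← F.map_comp (invMor f) f x hx]
  convert F.map_id Ω' x hx
  exact funext fun i => Equiv.symm_trans_self (f i)

theorem apMor_of_mem (f : Mor Ω Ω') {i : Fin r} {a : ℕ} (ha : a ∈ Ω i) :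
    apMor f i a = (f i ⟨a, ha⟩ : ℕ) :=
  dif_pos ha

theorem apMor_mem (f : Mor Ω Ω') {i : Fin r} {a : ℕ} (ha : a ∈ Ω i) : apMor f i a ∈ Ω' i := by
  rw [apMor_of_mem f ha]
  exact (f i ⟨a, ha⟩).2

theorem apMor_injOn (f : Mor Ω Ω') (i : Fin r) : Set.InjOn (apMor f i) ↑(Ω i) :=
  fun a ha b hb h => by
    rw [apMor_of_mem f ha, apMor_of_mem f hb] at h
    exact congrArg Subtype.val ((f i).injective (Subtype.ext h))

theorem apMor_surjOn (f : Mor Ω Ω') (i : Fin r) : Set.SurjOn (apMor f i) ↑(Ω i) ↑(Ω' i) :=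
  fun b hb => ⟨(f i).symm ⟨b, hb⟩, ((f i).symm ⟨b, hb⟩).2, by
    rw [apMor_of_mem f ((f i).symm ⟨b, hb⟩).2, Subtype.coe_eta, Equiv.apply_symm_apply]⟩

theorem oImage_le (f : Mor Ω Ω') (hB : B ≤ Ω) : oImage f B ≤ Ω' := fun i b hb => by
  obtain ⟨a, ha, rfl⟩ := Finset.mem_image.1 hb
  exact apMor_mem f (hB i ha)

theorem oImage_self (f : Mor Ω Ω') : oImage f Ω = Ω' :=
  funext fun i => Finset.coe_injective <| by
    rw [oImage, Finset.coe_image]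
    exact (apMor_surjOn f i).image_eq_of_mapsTo fun a ha => apMor_mem f ha

theorem oImage_sup (f : Mor Ω Ω') : oImage f (B ⊔ C) = oImage f B ⊔ oImage f C :=
  funext fun _ => Finset.image_union _ _

theorem oImage_bot (f : Mor Ω Ω') : oImage f ⊥ = ⊥ := rfl

theorem oImage_ne_bot (f : Mor Ω Ω') (hB : B ≠ ⊥) : oImage f B ≠ ⊥ := by
  obtain ⟨i, a, ha⟩ := Obj.ne_bot_iff.1 hB
  exact Obj.ne_bot_iff.2 ⟨i, apMor f i a, Finset.mem_image_of_mem _ ha⟩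

theorem oImage_disjoint (f : Mor Ω Ω') (hB : B ≤ Ω) (hC : C ≤ Ω) (h : Disjoint B C) :
    Disjoint (oImage f B) (oImage f C) :=
  Pi.disjoint_iff.2 fun i => Finset.disjoint_left.2 fun b hb hb' => by
    obtain ⟨a, ha, rfl⟩ := Finset.mem_image.1 hb
    obtain ⟨a', ha', he⟩ := Finset.mem_image.1 hb'
    obtain rfl := apMor_injOn f i (hC i ha') (hB i ha) he
    exact Finset.disjoint_left.1 (Pi.disjoint_iff.1 h i) ha ha'

theorem oImage_sdiff (f : Mor Ω Ω') (hB : B ≤ Ω) : oImage f (Ω \ B) = Ω' \ oImage f B := by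
  have hU : oImage f (Ω \ B) ⊔ oImage f B = Ω' := by
    rw [← oImage_sup, sdiff_sup_cancel hB, oImage_self]
  calc oImage f (Ω \ B) = (oImage f (Ω \ B) ⊔ oImage f B) \ oImage f B := by
        rw [sup_sdiff_right_self,
          (oImage_disjoint f sdiff_le hB disjoint_sdiff_self_left).sdiff_eq_left]
    _ = Ω' \ oImage f B := congrArg (· \ oImage f B) hU

theorem finsetSumEquiv_apply_left {s t : Finset ℕ} (h : Disjoint s t) {a : ℕ} (has : a ∈ s)
    (ha : a ∈ s ∪ t) : finsetSumEquiv h ⟨a, ha⟩ = Sum.inl ⟨a, has⟩ := by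
  rw [finsetSumEquiv, Equiv.trans_apply, Equiv.subtypeEquivRight_apply]
  exact Equiv.Set.union_apply_left _ (Finset.mem_coe.2 has)

theorem finsetSumEquiv_apply_right {s t : Finset ℕ} (h : Disjoint s t) {a : ℕ} (hat : a ∈ t)
    (ha : a ∈ s ∪ t) : finsetSumEquiv h ⟨a, ha⟩ = Sum.inr ⟨a, hat⟩ := by
  rw [finsetSumEquiv, Equiv.trans_apply, Equiv.subtypeEquivRight_apply]
  exact Equiv.Set.union_apply_right _ (Finset.mem_coe.2 hat)

theorem finsetUnionEquiv_apply_left {s t s' t' : Finset ℕ} (h : Disjoint s t)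
    (h' : Disjoint s' t') (f : {x // x ∈ s} ≃ {x // x ∈ s'}) (g : {x // x ∈ t} ≃ {x // x ∈ t'})
    {a : ℕ} (has : a ∈ s) (ha : a ∈ s ∪ t) :
    (finsetUnionEquiv h h' f g ⟨a, ha⟩ : ℕ) = f ⟨a, has⟩ := by
  rw [finsetUnionEquiv, Equiv.trans_apply, Equiv.trans_apply, finsetSumEquiv_apply_left h has ha,
    Equiv.sumCongr_apply, Sum.map_inl, (Equiv.symm_apply_eq _).2
      (finsetSumEquiv_apply_left h' (f ⟨a, has⟩).2 (Finset.mem_union_left _ (f ⟨a, has⟩).2)).symm]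

theorem finsetUnionEquiv_apply_right {s t s' t' : Finset ℕ} (h : Disjoint s t)
    (h' : Disjoint s' t') (f : {x // x ∈ s} ≃ {x // x ∈ s'}) (g : {x // x ∈ t} ≃ {x // x ∈ t'})
    {a : ℕ} (hat : a ∈ t) (ha : a ∈ s ∪ t) :
    (finsetUnionEquiv h h' f g ⟨a, ha⟩ : ℕ) = g ⟨a, hat⟩ := by
  rw [finsetUnionEquiv, Equiv.trans_apply, Equiv.trans_apply, finsetSumEquiv_apply_right h hat ha,
    Equiv.sumCongr_apply, Sum.map_inr, (Equiv.symm_apply_eq _).2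
      (finsetSumEquiv_apply_right h' (g ⟨a, hat⟩).2 (Finset.mem_union_right _ (g ⟨a, hat⟩).2)).symm]

theorem Species.map_congr {A A' : Obj r} (h : A = A') (f : Mor Ω A) (g : Mor Ω A')
    (hfg : ∀ i a (ha : a ∈ Ω i), (f i ⟨a, ha⟩ : ℕ) = g i ⟨a, ha⟩) : F.map f = F.map g := by
  subst h
  congr
  exact funext fun i => Equiv.ext fun ⟨a, ha⟩ => Subtype.ext (hfg i a ha)

theorem map_η (f : Mor Ω Ω') (hBC : Disjoint B C) (hU : B ⊔ C = Ω) (hp : p ∈ F.obj B)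
    (hq : q ∈ F.obj C) :
    F.map f (E.η B C (p, q)) = E.η (oImage f B) (oImage f C)
      (F.map (restrictMor f (hU ▸ le_sup_left)) p, F.map (restrictMor f (hU ▸ le_sup_right)) q) := by
  subst hU
  have h' := oImage_disjoint f le_sup_left le_sup_right hBC
  rw [← E.natural (oDisj_iff_disjoint.2 hBC) (oDisj_iff_disjoint.2 h') _ _ p hp q hq]
  refine congrFun (Species.map_congr (by rw [oUnion_eq_sup, ← oImage_sup, oImage_self]) f _
    fun i a ha => ?_) _
  rw [← apMor_of_mem f ha, morUnion]
  by_cases has : a ∈ B i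
  · exact (finsetUnionEquiv_apply_left (f := restrictMor f (le_sup_left : B ≤ B ⊔ C) i) _ _ _ has ha).symm
  · exact (finsetUnionEquiv_apply_right (g := restrictMor f (le_sup_right : C ≤ B ⊔ C) i) _ _ _
      ((Finset.mem_union.1 ha).resolve_left has) ha).symm

theorem map_mem_img (f : Mor Ω Ω') (hB : B ≤ Ω) (hx : x ∈ E.img B (Ω \ B)) :
    F.map f x ∈ E.img (oImage f B) (Ω' \ oImage f B) := by
  obtain ⟨p, hp, q, hq, rfl⟩ := CompOp.mem_img.1 hx
  rw [map_η f disjoint_sdiff_self_right (sup_sdiff_cancel_right hB) hp hq, ← oImage_sdiff f hB]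
  exact CompOp.η_mem_img (F.map_mem _ p hp) (F.map_mem _ q hq)

theorem map_mem_indec (f : Mor Ω Ω') (hx : x ∈ indec F E Ω) : F.map f x ∈ indec F E Ω' := by
  obtain ⟨hΩ, hxF, hsplit⟩ := mem_indec_iff.1 hx
  refine mem_indec_iff.2 ⟨fun hΩ' => hΩ ?_, F.map_mem f x hxF, fun A hA hA0 hAΩ' hmem => ?_⟩
  · subst hΩ'
    exact (oImage_self (invMor f)).symm.trans (oImage_bot _)
  have hgA : oImage (invMor f) A ≠ Ω := fun h => hAΩ' <| le_antisymm hA <| sdiff_eq_bot_iff.1 <| by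
    by_contra hne
    exact oImage_ne_bot (invMor f) hne (by rw [oImage_sdiff _ hA, h, sdiff_self])
  refine hsplit _ (oImage_le _ hA) (oImage_ne_bot _ hA0) hgA ?_
  have hmem' := map_mem_img (E := E) (invMor f) hA hmem
  rwa [Species.map_invMor_map f hxF] at hmem'

theorem map_mem_indecK (k : ℕ) (f : Mor Ω Ω') (hx : x ∈ indecK F E k Ω) :
    F.map f x ∈ indecK F E k Ω' := by
  induction k generalizing Ω Ω' x with
  | zero =>
    obtain ⟨rfl, hx'⟩ := mem_indecK_zero.1 hx
    obtain rfl : Ω' = ⊥ := (oImage_self f).symm.trans (oImage_bot f)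
    exact mem_indecK_zero.2 ⟨rfl, F.map_mem f x hx'⟩
  | succ k ih =>
    obtain ⟨B, hB, p, hp, q, hq, rfl⟩ := mem_indecK_succ.1 hx
    obtain ⟨p', hp', q', hq', he⟩ : ∃ p' ∈ indec F E (oImage f B),
        ∃ q' ∈ indecK F E k (oImage f (Ω \ B)),
          F.map f (E.η B (Ω \ B) (p, q)) = E.η (oImage f B) (oImage f (Ω \ B)) (p', q') :=
      ⟨_, map_mem_indec _ hp, _, ih _ hq, map_η f disjoint_sdiff_self_right
        (sup_sdiff_cancel_right hB) (indec_subset_obj hp) (indecK_subset_obj k hq)⟩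
    rw [oImage_sdiff f hB] at hq' he
    exact mem_indecK_succ.2 ⟨_, oImage_le f hB, p', hp', q', hq', he.symm⟩

end Transport

section WeightSum

variable {r : ℕ} {F : Species r} {E : CompOp F} {Λ : Type} [CommRing Λ] [Algebra ℚ Λ]

def weightSum (F : Species r) (S : Obj r → Set ℕ) (w : Obj r → ℕ → Λ) (Ω : Obj r) : Λ :=
  ∑ x ∈ (F.obj Ω).filter (· ∈ S Ω), w Ω x

theorem weightSum_eq_of_card_eq (w : Weight F E Λ) {S : Obj r → Set ℕ}
    (hS : ∀ {Ω Ω' : Obj r} (f : Mor Ω Ω') {x : ℕ}, x ∈ S Ω → F.map f x ∈ S Ω') {Ω Ω' : Obj r}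
    (h : ∀ i, (Ω i).card = (Ω' i).card) : weightSum F S w.w Ω = weightSum F S w.w Ω' := by
  let f : Mor Ω Ω' := fun i => Finset.equivOfCardEq (h i)
  refine Finset.sum_nbij' (F.map f) (F.map (invMor f)) (fun a ha => ?_) (fun a ha => ?_)
    (fun a ha => ?_) (fun a ha => ?_) (fun a ha => ?_) <;>
    simp only [Finset.mem_filter] at ha ⊢
  · exact ⟨F.map_mem f a ha.1, hS f ha.2⟩
  · exact ⟨F.map_mem _ a ha.1, hS _ ha.2⟩
  · exact Species.map_invMor_map f ha.1
  · exact Species.map_map_invMor f ha.1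
  · exact (w.W1 f a ha.1).symm

end WeightSum

section Counting

variable {r : ℕ} {F : Species r} {E : CompOp F} {Λ : Type} [CommRing Λ] [Algebra ℚ Λ]
  {Ω B : Obj r} {k : ℕ}

theorem Weight.w_η (w : Weight F E Λ) (hB : B ≤ Ω) {p q : ℕ} (hp : p ∈ indec F E B)
    (hq : q ∈ F.obj (Ω \ B)) : w.w Ω (E.η B (Ω \ B) (p, q)) = w.w B p * w.w (Ω \ B) q := by
  have h := w.W2 (oDisj_iff_disjoint.2 disjoint_sdiff_self_right) p hp q hq
  rwa [oUnion_eq_sup, sup_sdiff_cancel_right hB] at h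

theorem image_η_indec_indecK (hF : ∃ Ω : Obj r, (F.obj Ω).Nonempty) (hB : B ≤ Ω) :
    ((F.obj B).filter (· ∈ indec F E B) ×ˢ
        (F.obj (Ω \ B)).filter (· ∈ indecK F E k (Ω \ B))).image (E.η B (Ω \ B)) =
      ((F.obj Ω).filter (· ∈ indecK F E (k + 1) Ω)).filter (B ∈ components E Ω ·) := by
  ext x
  simp only [Finset.mem_image, Finset.mem_product, Finset.mem_filter, Prod.exists]
  constructor
  · rintro ⟨p, q, ⟨⟨-, hp⟩, -, hq⟩, rfl⟩
    have hx : E.η B (Ω \ B) (p, q) ∈ indecK F E (k + 1) Ω :=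
      mem_indecK_succ.2 ⟨B, hB, p, hp, q, hq, rfl⟩
    exact ⟨⟨indecK_subset_obj _ hx, hx⟩, hB, p, hp, q, indecK_subset_obj k hq, rfl⟩
  · rintro ⟨⟨-, hx⟩, hBx⟩
    obtain ⟨-, p, hp, q, hq, rfl⟩ := (mem_components_iff_of_mem_indecK_succ hF hx).1 hBx
    exact ⟨p, q, ⟨⟨indec_subset_obj hp, hp⟩, indecK_subset_obj k hq, hq⟩, rfl⟩

theorem weightSum_indec_mul_weightSum_indecK (w : Weight F E Λ)
    (hF : ∃ Ω : Obj r, (F.obj Ω).Nonempty) (hB : B ≤ Ω) :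
    weightSum F (indec F E) w.w B * weightSum F (indecK F E k) w.w (Ω \ B) =
      ∑ x ∈ ((F.obj Ω).filter (· ∈ indecK F E (k + 1) Ω)).filter (B ∈ components E Ω ·),
        w.w Ω x := by
  have hinj : Set.InjOn (E.η B (Ω \ B)) ↑((F.obj B).filter (· ∈ indec F E B) ×ˢ
      (F.obj (Ω \ B)).filter (· ∈ indecK F E k (Ω \ B))) := by
    refine (E.inj_η (oDisj_iff_disjoint.2 disjoint_sdiff_self_right)).mono ?_
    rw [Finset.coe_product]
    exact Set.prod_mono (Finset.coe_subset.2 (Finset.filter_subset _ _))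
      (Finset.coe_subset.2 (Finset.filter_subset _ _))
  rw [weightSum, weightSum, Finset.sum_mul_sum, ← Finset.sum_product',
    ← image_η_indec_indecK hF hB, Finset.sum_image hinj]
  refine Finset.sum_congr rfl fun pq hpq => ?_
  simp only [Finset.mem_product, Finset.mem_filter] at hpq
  exact (w.w_η hB hpq.1.2 hpq.2.1).symm

theorem card_filter_Iic_mem_components (hF : ∃ Ω : Obj r, (F.obj Ω).Nonempty) {x : ℕ}
    (hx : x ∈ indecK F E k Ω) : ((Finset.Iic Ω).filter (· ∈ components E Ω x)).card = k := by
  obtain ⟨-, s, ⟨hs, -⟩, hcard⟩ := (mem_indecK_iff hF k).1 hx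
  rw [← hcard]
  congr 1
  apply Finset.coe_injective
  rw [hs, Finset.coe_filter]
  ext B
  simp only [Finset.mem_Iic, Set.mem_ofPred_eq, and_iff_right_iff_imp]
  exact fun hB => hB.1

/-- Each element of `F_Η^(k+1)[Ω]` arises as `η(p, q)` with `p` indecomposable and
`q ∈ F_Η^(k)`, once for each of its `k + 1` components. -/
theorem sum_weightSum_indec_mul_weightSum_indecK (w : Weight F E Λ)
    (hF : ∃ Ω : Obj r, (F.obj Ω).Nonempty) (k : ℕ) (Ω : Obj r) :
    ∑ B ∈ Finset.Iic Ω, weightSum F (indec F E) w.w B * weightSum F (indecK F E k) w.w (Ω \ B) =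
      (k + 1) • weightSum F (indecK F E (k + 1)) w.w Ω := by
  rw [Finset.sum_congr rfl fun B hB =>
      weightSum_indec_mul_weightSum_indecK w hF (Finset.mem_Iic.1 hB),
    Finset.sum_comm' (t' := (F.obj Ω).filter (· ∈ indecK F E (k + 1) Ω))
      (s' := fun x => (Finset.Iic Ω).filter (· ∈ components E Ω x)),
    weightSum, Finset.smul_sum]
  · refine Finset.sum_congr rfl fun x hx => ?_
    rw [Finset.sum_const, card_filter_Iic_mem_components hF (Finset.mem_filter.1 hx).2]
  · intro B x
    simp only [Finset.mem_Iic, Finset.mem_filter]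
    constructor
    · rintro ⟨hB, hx, hBx⟩
      exact ⟨⟨hB, hBx⟩, hx⟩
    · rintro ⟨⟨hB, hBx⟩, hx⟩
      exact ⟨hB, hx, hBx⟩

end Counting

section GeneratingFunction

open Finset.HasAntidiagonal

variable {r : ℕ} {F : Species r} {E : CompOp F} {Λ : Type} [CommRing Λ] [Algebra ℚ Λ]

def cardVec (Ω : Obj r) : Fin r →₀ ℕ := Finsupp.equivFunOnFinite.symm fun i => (Ω i).card

theorem cardVec_apply (Ω : Obj r) (i : Fin r) : cardVec Ω i = (Ω i).card :=
  Finsupp.equivFunOnFinite_symm_apply_apply _ _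

theorem cardVec_stdObj (d : Fin r →₀ ℕ) : cardVec (stdObj fun i => d i) = d :=
  Finsupp.ext fun i => by simp [cardVec_apply, stdObj]

theorem cardVec_add_cardVec_sdiff {Ω B : Obj r} (hB : B ≤ Ω) :
    cardVec B + cardVec (Ω \ B) = cardVec Ω :=
  Finsupp.ext fun i => by
    rw [Finsupp.add_apply, cardVec_apply, cardVec_apply, cardVec_apply, add_comm]
    exact Finset.card_sdiff_add_card_eq_card (hB i)

theorem filter_Iic_cardVec_eq_piFinset {Ω : Obj r} {p : (Fin r →₀ ℕ) × (Fin r →₀ ℕ)}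
    (hp : p ∈ antidiagonal (cardVec Ω)) :
    (Finset.Iic Ω).filter (fun B => (cardVec B, cardVec (Ω \ B)) = p) =
      Fintype.piFinset fun i => (Ω i).powersetCard (p.1 i) := by
  rw [mem_antidiagonal] at hp
  ext B
  simp only [Finset.mem_filter, Finset.mem_Iic, Fintype.mem_piFinset, Finset.mem_powersetCard,
    Prod.ext_iff, Finsupp.ext_iff, cardVec_apply, forall_and]
  refine ⟨fun h => ⟨h.1, h.2.1⟩, fun h => ⟨h.1, h.2, fun i => ?_⟩⟩
  have hsd := Finset.card_sdiff_add_card_eq_card (h.1 i)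
  have hpi := congrArg (· i) hp
  have h₁ := h.2 i
  simp only [Finsupp.add_apply, cardVec_apply] at hpi
  rw [Pi.sdiff_apply]
  omega

theorem sum_Iic_eq_sum_antidiagonal {M : Type*} [AddCommMonoid M]
    (g : (Fin r →₀ ℕ) × (Fin r →₀ ℕ) → M) (Ω : Obj r) :
    ∑ B ∈ Finset.Iic Ω, g (cardVec B, cardVec (Ω \ B)) =
      ∑ p ∈ antidiagonal (cardVec Ω), (∏ i, (cardVec Ω i).choose (p.1 i)) • g p := by
  rw [← Finset.sum_fiberwise_of_maps_to (t := antidiagonal (cardVec Ω))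
    (g := fun B => (cardVec B, cardVec (Ω \ B)))
    fun B hB => mem_antidiagonal.2 (cardVec_add_cardVec_sdiff (Finset.mem_Iic.1 hB))]
  refine Finset.sum_congr rfl fun p hp => ?_
  rw [Finset.sum_congr rfl fun B hB => congrArg g (Finset.mem_filter.1 hB).2, Finset.sum_const,
    filter_Iic_cardVec_eq_piFinset hp, Fintype.card_piFinset]
  simp only [Finset.card_powersetCard, cardVec_apply]

theorem one_div_factorial_mul_one_div_factorial (a b : ℕ) :
    (1 / a.factorial : ℚ) * (1 / b.factorial) = 1 / (a + b).factorial * (a + b).choose a := by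
  have h := Nat.add_choose_mul_factorial_mul_factorial b a
  rw [add_comm b a] at h
  have ha := Nat.factorial_pos a
  have hb := Nat.factorial_pos b
  field_simp
  exact_mod_cast h.symm.trans (by ring)

theorem coeff_GF (S : Obj r → Set ℕ) (w : Obj r → ℕ → Λ) (d : Fin r →₀ ℕ) :
    MvPowerSeries.coeff d (GF F S w) =
      algebraMap ℚ Λ (∏ i, (1 / (d i).factorial : ℚ)) * weightSum F S w (stdObj fun i => d i) :=
  rfl

theorem coeff_GF_mul_GF (w : Weight F E Λ) {S T : Obj r → Set ℕ}
    (hS : ∀ {Ω Ω' : Obj r} (f : Mor Ω Ω') {x : ℕ}, x ∈ S Ω → F.map f x ∈ S Ω')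
    (hT : ∀ {Ω Ω' : Obj r} (f : Mor Ω Ω') {x : ℕ}, x ∈ T Ω → F.map f x ∈ T Ω')
    (d : Fin r →₀ ℕ) :
    MvPowerSeries.coeff d (GF F S w.w * GF F T w.w) =
      algebraMap ℚ Λ (∏ i, (1 / (d i).factorial : ℚ)) *
        ∑ B ∈ Finset.Iic (stdObj fun i => d i),
          weightSum F S w.w B * weightSum F T w.w ((stdObj fun i => d i) \ B) := by
  have hstd : ∀ B : Obj r, ∀ i, ((stdObj fun j => cardVec B j) i).card = (B i).card :=
    fun B i => by simp [stdObj, cardVec_apply]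
  have hsum := sum_Iic_eq_sum_antidiagonal
    (fun p => weightSum F S w.w (stdObj fun i => p.1 i) *
      weightSum F T w.w (stdObj fun i => p.2 i)) (stdObj fun i => d i)
  simp only [cardVec_stdObj] at hsum
  rw [Finset.sum_congr rfl fun B _ => by
      rw [weightSum_eq_of_card_eq w hS (hstd B), weightSum_eq_of_card_eq w hT (hstd _)]] at hsum
  rw [hsum, Finset.mul_sum, MvPowerSeries.coeff_mul]
  refine Finset.sum_congr rfl fun p hp => ?_
  obtain rfl := mem_antidiagonal.1 hp
  rw [coeff_GF, coeff_GF, nsmul_eq_mul]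
  have hq : (∏ i, (1 / (p.1 i).factorial : ℚ)) * ∏ i, (1 / (p.2 i).factorial : ℚ) =
      (∏ i, (1 / ((p.1 + p.2) i).factorial : ℚ)) *
        ((∏ i, ((p.1 + p.2) i).choose (p.1 i) : ℕ) : ℚ) := by
    rw [Nat.cast_prod, ← Finset.prod_mul_distrib, ← Finset.prod_mul_distrib]
    exact Finset.prod_congr rfl fun i _ => one_div_factorial_mul_one_div_factorial _ _
  have hq' := congrArg (algebraMap ℚ Λ) hq
  simp only [map_mul, map_natCast] at hq'
  linear_combination (weightSum F S w.w (stdObj fun i => p.1 i) *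
    weightSum F T w.w (stdObj fun i => p.2 i)) * hq'

end GeneratingFunction

theorem MvPowerSeries.eq_C_one_div_mul_of_nsmul_eq {σ Λ : Type*} [CommRing Λ] [Algebra ℚ Λ]
    {f g : MvPowerSeries σ Λ} {n : ℕ} (hn : n ≠ 0) (h : n • f = g) :
    f = MvPowerSeries.C (algebraMap ℚ Λ (1 / n)) * g := by
  rw [← h, nsmul_eq_mul, ← mul_assoc, ← map_natCast (MvPowerSeries.C (σ := σ) (R := Λ)),
    ← map_mul, ← map_natCast (algebraMap ℚ Λ), ← map_mul, one_div_mul_cancel (Nat.cast_ne_zero.2 hn),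
    map_one, map_one, one_mul]

section Main

variable {r : ℕ} {F : Species r} {E : CompOp F} {Λ : Type} [CommRing Λ] [Algebra ℚ Λ]

theorem stdObj_eq_bot_iff {d : Fin r →₀ ℕ} : (stdObj fun i => d i) = ⊥ ↔ d = 0 := by
  simp [funext_iff, stdObj, Finsupp.ext_iff]

theorem weightSum_indecK_zero (w : Weight F E Λ) (hF : ∃ Ω : Obj r, (F.obj Ω).Nonempty)
    (Ω : Obj r) : weightSum F (indecK F E 0) w.w Ω = if Ω = ⊥ then 1 else 0 := by
  split_ifs with hΩ
  · subst hΩ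
    obtain ⟨e, he⟩ := Finset.card_eq_one.1 (card_obj_bot E hF)
    rw [weightSum, Finset.filter_true_of_mem fun x hx => mem_indecK_zero.2 ⟨rfl, hx⟩, he,
      Finset.sum_singleton]
    exact w.W0 e (he ▸ Finset.mem_singleton_self e)
  · rw [weightSum, Finset.filter_false_of_mem fun x _ hx => hΩ (mem_indecK_zero.1 hx).1,
      Finset.sum_empty]

theorem GF_indecK_zero (w : Weight F E Λ) (hF : ∃ Ω : Obj r, (F.obj Ω).Nonempty) :
    GF F (indecK F E 0) w.w = 1 := by
  ext d
  rw [coeff_GF, weightSum_indecK_zero w hF, MvPowerSeries.coeff_one]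
  simp only [stdObj_eq_bot_iff]
  split_ifs with hd
  · simp [hd]
  · rw [mul_zero]

theorem GF_indec_mul_GF_indecK (w : Weight F E Λ) (hF : ∃ Ω : Obj r, (F.obj Ω).Nonempty)
    (k : ℕ) :
    GF F (indec F E) w.w * GF F (indecK F E k) w.w = (k + 1) • GF F (indecK F E (k + 1)) w.w := by
  ext d
  rw [coeff_GF_mul_GF w (fun f _ hx => map_mem_indec f hx) (fun f _ hx => map_mem_indecK k f hx),
    sum_weightSum_indec_mul_weightSum_indecK w hF, map_nsmul, coeff_GF, mul_smul_comm]

end Main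

theorem stmt17_general {r : ℕ} (F : Species r) (E : CompOp F)
    (hF : ∃ Ω : Obj r, (F.obj Ω).Nonempty)
    (Λ : Type) [CommRing Λ] [Algebra ℚ Λ] (w : Weight F E Λ) (k : ℕ) :
    GF F (indecK F E k) w.w =
      MvPowerSeries.C (σ := Fin r) (R := Λ) (algebraMap ℚ Λ ((1 : ℚ) / (Nat.factorial k))) *
        (GF F (indec F E) w.w) ^ k := by
  induction k with
  | zero => simp [GF_indecK_zero w hF]
  | succ k ih =>
    have hrec := GF_indec_mul_GF_indecK w hF k
    rw [ih] at hrec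
    rw [MvPowerSeries.eq_C_one_div_mul_of_nsmul_eq k.add_one_ne_zero hrec.symm, Nat.factorial_succ,
      Nat.cast_mul, ← one_div_mul_one_div, map_mul, map_mul]
    ring

/-- `GF_{F_Η^(k)} = (1/k!) (GF_{F_Η})^k` for every `k ≥ 0`. -/
theorem stmt17 {r : ℕ} (hr : 0 < r) (F : Species r) (E : CompOp F)
    (hF : ∃ Ω : Obj r, (F.obj Ω).Nonempty)
    (Λ : Type) [CommRing Λ] [Algebra ℚ Λ] (w : Weight F E Λ) (k : ℕ) :
    GF F (indecK F E k) w.w =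
      MvPowerSeries.C (σ := Fin r) (R := Λ) (algebraMap ℚ Λ ((1 : ℚ) / (Nat.factorial k))) *
        (GF F (indec F E) w.w) ^ k :=
  stmt17_general F E hF Λ w k
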